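/- Suppose the recovery rate is zero (β = 0) and the rebalancing strategies are independent of bank performance, i.e. α(t_l) ∈ [0,1]^n is F_{t_l}-measurable and does not depend on the capital or cash-account processes (e.g. α ≡ 0). Then for any clearing solution (K*, V*, P*, τ*) = Ψ(K*, V*, P*, τ*; α) there exists a clearing solution (K^H, V^H, P^H, τ^H) = Ψ^H(K^H, V^H, P^H, τ^H; α) with (K*, V*, P*, τ*) ≤ (K^H, V^H, P^H, τ^H) componentwise. Conversely, for any clearing solution (K^H, V^H, P^H, τ^H) = Ψ^H(K^H, V^H, P^H, τ^H; α) there exists a clearing solution (K*, V*, P*, τ*) = Ψ(K*, V*, P*, τ*; α) with (K*, V*, P*, τ*) ≤ (K^H, V^H, P^H, τ^H) componentwise. -/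

import Mathlib

open MeasureTheory

namespace Paper

open Classical in
/-- real-valued indicator of a proposition -/
noncomputable def indR (p : Prop) : ℝ := if p then 1 else 0

open Classical in
/-- boolean indicator of a proposition -/
noncomputable def indB (p : Prop) : Bool := if p then true else false

/-- Data of the multiple-maturity interbank model. -/
structure MM (Ω : Type*) (n ℓ : ℕ) where
  /-- terminal time -/
  T : ℝ
  /-- times `0 = t 0 < t 1 < ... < t ℓ = T` -/
  t : Fin (ℓ+1) → ℝ
  /-- external (risky) asset process -/
  x : Fin (ℓ+1) → Ω → Fin n → ℝ
  /-- interbank nominal liabilities due at each time: `Lb l i j` owed by bank `i` to bank `j` -/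
  Lb : Fin (ℓ+1) → Fin n → Fin n → ℝ
  /-- external (societal) nominal liabilities due at each time -/
  L0 : Fin (ℓ+1) → Fin n → ℝ
  /-- recovery rate -/
  β : ℝ
  /-- risk-free rate -/
  r : ℝ

namespace MM

variable {Ω : Type*} {n ℓ : ℕ}

/-- Standing assumptions of the multiple-maturity model. -/
structure Valid [MeasurableSpace Ω] (M : MM Ω n ℓ)
    (𝓕 : Fin (ℓ+1) → MeasurableSpace Ω) (μ : Measure Ω) : Prop where
  hn : 1 ≤ n
  hTop : (inferInstance : MeasurableSpace Ω) = ⊤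
  hprob : IsProbabilityMeasure μ
  hpos : ∀ ω : Ω, 0 < μ {ω}
  hmono : Monotone 𝓕
  h0 : 𝓕 0 = ⊥
  hlast : 𝓕 (Fin.last ℓ) = (inferInstance : MeasurableSpace Ω)
  ht : StrictMono M.t
  ht0 : M.t 0 = 0
  htT : M.t (Fin.last ℓ) = M.T
  hx : ∀ l i, Measurable[𝓕 l] fun ω => M.x l ω i
  hx0 : ∀ l ω i, 0 < M.x l ω i
  hLb : ∀ l i j, 0 ≤ M.Lb l i j
  hLbd : ∀ l i, M.Lb l i i = 0
  hL0 : ∀ l i, 0 ≤ M.L0 l i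
  hLb0 : ∀ i j, M.Lb 0 i j = 0
  hL00 : ∀ i, M.L0 0 i = 0
  hβ0 : 0 ≤ M.β
  hβ1 : M.β ≤ 1
  hr : 0 ≤ M.r

/-- total nominal obligations of bank `i` due at time `t_k` (interbank plus societal) -/
noncomputable def outflow (M : MM Ω n ℓ) (k : Fin (ℓ+1)) (i : Fin n) : ℝ :=
  (∑ j, M.Lb k i j) + M.L0 k i

open Classical in
/-- the capital component `Ψ_{K,i}(t_l, Ṽ, P̃, τ)` of the multiple-maturity clearing map -/
noncomputable def Kval (M : MM Ω n ℓ)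
    (V : Fin (ℓ+1) → Ω → Fin n → ℝ)
    (P : Fin (ℓ+1) → Fin (ℓ+1) → Ω → Fin n → ℝ)
    (τ : Fin n → Ω → ℝ) (l : Fin (ℓ+1)) (ω : Ω) (i : Fin n) : ℝ :=
  V l ω i + M.β * (∑ j, M.Lb l j i * indR (τ j ω = M.t l))
    + ∑ k ∈ Finset.univ.filter (fun k => l < k),
        Real.exp (-(M.r * (M.t k - M.t l))) *
          ((∑ j, M.Lb k j i * (M.β + (1 - M.β) * P l k ω j) * indR (M.t l ≤ τ j ω))
            - M.outflow k i)

open Classical in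
/-- the cash-account component `Ψ_{V,i}` of the clearing map at time `t_{l+1}`, for a given
realized rebalancing process `A`: the previous cash account (plus recovery payments from
banks that defaulted at `t_l`) grows at the portfolio return determined by `A(t_l)`, and the
net interbank and societal payments due at `t_{l+1}` are settled. -/
noncomputable def Vval (M : MM Ω n ℓ)
    (A : Fin (ℓ+1) → Ω → Fin n → ℝ)
    (V : Fin (ℓ+1) → Ω → Fin n → ℝ)
    (τ : Fin n → Ω → ℝ) (l : Fin ℓ) (ω : Ω) (i : Fin n) : ℝ :=
  (Real.exp (M.r * (M.t l.succ - M.t l.castSucc)) * A l.castSucc ω i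
      + (M.x l.succ ω i / M.x l.castSucc ω i) * (1 - A l.castSucc ω i))
    * (V l.castSucc ω i
        + M.β * ∑ k ∈ Finset.univ.filter (fun k => l.castSucc ≤ k),
            Real.exp (-(M.r * (M.t k - M.t l.castSucc))) *
              (∑ j, M.Lb k j i * indR (τ j ω = M.t l.castSucc)))
    + (∑ j, M.Lb l.succ j i * indR (M.t l.succ < τ j ω))
    - M.outflow l.succ i

/-- the default-time component `Ψ_{τ,i}`: the first time at which the capital or the cash
account of bank `i` is negative, and `T+1` if both stay nonnegative -/
noncomputable def τval (M : MM Ω n ℓ) (K V : Fin (ℓ+1) → Ω → Fin n → ℝ)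
    (i : Fin n) (ω : Ω) : ℝ :=
  sInf (insert (M.T + 1)
    ((fun l => M.t l) '' {l : Fin (ℓ+1) | min (K l ω i) (V l ω i) < 0}))

/-- `(K, V, P, τ)` is a clearing solution (a fixed point of the multiple-maturity clearing
map `Ψ(·; α)` in the domain `𝔻`) for the rebalancing strategy `α`, which may depend on the
current time, capital and cash account. -/
def isClearing [MeasurableSpace Ω] (M : MM Ω n ℓ)
    (𝓕 : Fin (ℓ+1) → MeasurableSpace Ω) (μ : Measure Ω)
    (α : Fin (ℓ+1) → (Ω → Fin n → ℝ) → (Ω → Fin n → ℝ) → Ω → Fin n → ℝ)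
    (K V : Fin (ℓ+1) → Ω → Fin n → ℝ)
    (P : Fin (ℓ+1) → Fin (ℓ+1) → Ω → Fin n → ℝ)
    (τ : Fin n → Ω → ℝ) : Prop :=
  (∀ l i, Measurable[𝓕 l] fun ω => K l ω i) ∧
  (∀ l i, Measurable[𝓕 l] fun ω => V l ω i) ∧
  (∀ l k i, l ≤ k → Measurable[𝓕 l] fun ω => P l k ω i) ∧
  (∀ l k, l ≤ k → ∀ ω i, 0 ≤ P l k ω i ∧ P l k ω i ≤ 1) ∧
  (∀ i ω, (∃ l, τ i ω = M.t l) ∨ τ i ω = M.T + 1) ∧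
  (∀ ω i, V 0 ω i = M.x 0 ω i) ∧
  (∀ (l : Fin ℓ) ω i,
    V l.succ ω i = M.Vval (fun l' => α l' (K l') (V l')) V τ l ω i) ∧
  (∀ l ω i, K l ω i = M.Kval V P τ l ω i) ∧
  (∀ l k, l ≤ k → ∀ ω i,
    P l k ω i = (μ[fun ω' => indR (M.t k < τ i ω') | 𝓕 l]) ω) ∧
  (∀ i ω, τ i ω = M.τval K V i ω)

/-- `(K, V, P, τ)` is a clearing solution under historical price accounting: identical to
`isClearing` except that the survival component is `Ψ^H_{P,i}(t_l, t_k, τ) = 1{τ_i > t_l}`. -/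
def isClearingH [MeasurableSpace Ω] (M : MM Ω n ℓ)
    (𝓕 : Fin (ℓ+1) → MeasurableSpace Ω) (μ : Measure Ω)
    (α : Fin (ℓ+1) → (Ω → Fin n → ℝ) → (Ω → Fin n → ℝ) → Ω → Fin n → ℝ)
    (K V : Fin (ℓ+1) → Ω → Fin n → ℝ)
    (P : Fin (ℓ+1) → Fin (ℓ+1) → Ω → Fin n → ℝ)
    (τ : Fin n → Ω → ℝ) : Prop :=
  (∀ l i, Measurable[𝓕 l] fun ω => K l ω i) ∧
  (∀ l i, Measurable[𝓕 l] fun ω => V l ω i) ∧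
  (∀ l k i, l ≤ k → Measurable[𝓕 l] fun ω => P l k ω i) ∧
  (∀ l k, l ≤ k → ∀ ω i, 0 ≤ P l k ω i ∧ P l k ω i ≤ 1) ∧
  (∀ i ω, (∃ l, τ i ω = M.t l) ∨ τ i ω = M.T + 1) ∧
  (∀ ω i, V 0 ω i = M.x 0 ω i) ∧
  (∀ (l : Fin ℓ) ω i,
    V l.succ ω i = M.Vval (fun l' => α l' (K l') (V l')) V τ l ω i) ∧
  (∀ l ω i, K l ω i = M.Kval V P τ l ω i) ∧
  (∀ l k, l ≤ k → ∀ ω i, P l k ω i = indR (M.t l < τ i ω)) ∧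
  (∀ i ω, τ i ω = M.τval K V i ω)

/-- the state of the joint process `(x(t_l), K(t_l), V(t_l), (P(t_l,t_k))_{k=l}^ℓ, ι(t_l))`
at time `t_l`, where `ι(t_l) = 1{τ ≥ t_l}`; entries of `P(t_l, ·)` with index `k < l` are
not part of the state and are replaced by `0` -/
noncomputable def mstate (M : MM Ω n ℓ)
    (K V : Fin (ℓ+1) → Ω → Fin n → ℝ)
    (P : Fin (ℓ+1) → Fin (ℓ+1) → Ω → Fin n → ℝ)
    (τ : Fin n → Ω → ℝ) (l : Fin (ℓ+1)) (ω : Ω) :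
    (Fin n → ℝ) × (Fin n → ℝ) × (Fin n → ℝ) × (Fin (ℓ+1) → Fin n → ℝ) × (Fin n → Bool) :=
  (M.x l ω, K l ω, V l ω,
   fun k i => if l ≤ k then P l k ω i else 0,
   fun i => indB (M.t l ≤ τ i ω))

end MM

/-
With zero recovery the clearing map is monotone: once the recovery terms vanish, capital and
cash account are nondecreasing in the default times and in the valuation of interbank assets,
and a strategy that ignores bank performance makes the cash account a function of the default
times alone. A clearing solution is thus a fixed point of a monotone map on grid-valued
default times, and such a map has finite range. The two accountings differ only in how they
value a claim on a bank alive today, and `ℙ(τ > t_k | 𝓕_l) ≤ 1{τ > t_l}`. Hence a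
mark-to-market solution lies below its image under the historical price map, whose iterates
increase to a historical price solution above it; and a historical price solution lies above
its image under the mark-to-market map, whose iterates decrease to a solution below it.
-/

theorem indR_nonneg (p : Prop) : 0 ≤ indR p := by
  unfold indR; split <;> norm_num

theorem indR_le_one (p : Prop) : indR p ≤ 1 := by
  unfold indR; split <;> norm_num

theorem indR_mono {p q : Prop} (h : p → q) : indR p ≤ indR q := by
  unfold indR; split_ifs with hp hq <;> first | exact absurd (h hp) hq | norm_num

theorem measurable_indR {α : Type*} {m : MeasurableSpace α} {p : α → Prop}
    (hp : MeasurableSet[m] {a | p a}) : Measurable[m] fun a => indR (p a) :=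
  Measurable.ite hp measurable_const measurable_const

theorem Monotone.exists_isFixedPt_ge {α : Type*} [PartialOrder α] {f : α → α}
    (hf : Monotone f) (hfin : (Set.range f).Finite) {p : α → Prop} (hp : ∀ a, p a → p (f a))
    {x : α} (hpx : p x) (hx : x ≤ f x) : ∃ y, p y ∧ Function.IsFixedPt f y ∧ x ≤ y := by
  have hmono : Monotone fun m => f^[m] x := hf.monotone_iterate_of_le_map hx
  -- the increasing sequence of iterates takes finitely many values, so it repeats
  obtain ⟨a, b, hab, heq⟩ := hfin.exists_lt_map_eq_of_forall_mem (f := fun m => f^[m + 1] x)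
    fun m => by rw [Function.iterate_succ_apply']; exact Set.mem_range_self _
  refine ⟨f^[a + 1] x, Function.Iterate.rec p hpx hp _, ?_, hmono (Nat.zero_le _)⟩
  rw [Function.IsFixedPt, ← Function.iterate_succ_apply' f]
  exact le_antisymm (heq ▸ hmono (by omega)) (hmono (Nat.le_succ _))

theorem Monotone.exists_isFixedPt_le {α : Type*} [PartialOrder α] {f : α → α}
    (hf : Monotone f) (hfin : (Set.range f).Finite) {p : α → Prop} (hp : ∀ a, p a → p (f a))
    {x : α} (hpx : p x) (hx : f x ≤ x) : ∃ y, p y ∧ Function.IsFixedPt f y ∧ y ≤ x :=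
  Monotone.exists_isFixedPt_ge (α := αᵒᵈ) hf.dual hfin hp hpx hx

section FiniteProbability

variable {Ω : Type*} {m mΩ : MeasurableSpace Ω} {μ : Measure Ω}

theorem forall_of_ae_of_measure_singleton_pos [Countable Ω] (hpos : ∀ ω, 0 < μ {ω})
    {p : Ω → Prop} (h : ∀ᵐ ω ∂μ, p ω) (ω : Ω) : p ω :=
  ae_iff_of_countable.1 h ω (hpos ω).ne'

theorem condExp_mono_of_le [Finite Ω] [MeasurableSingletonClass Ω] [IsFiniteMeasure μ]
    (hpos : ∀ ω, 0 < μ {ω}) {f g : Ω → ℝ} (hfg : f ≤ g) : μ[f|m] ≤ μ[g|m] :=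
  forall_of_ae_of_measure_singleton_pos hpos <|
    condExp_mono .of_finite .of_finite (ae_of_all _ hfg)

theorem condExp_nonneg_of_nonneg [Countable Ω] (hpos : ∀ ω, 0 < μ {ω}) {f : Ω → ℝ}
    (hf : 0 ≤ f) : 0 ≤ μ[f|m] :=
  forall_of_ae_of_measure_singleton_pos hpos <| condExp_nonneg (ae_of_all _ hf)

end FiniteProbability

namespace MM

variable {Ω : Type*} {n ℓ : ℕ} {M : MM Ω n ℓ}

section DefaultTime

variable {K V K' V' : Fin (ℓ+1) → Ω → Fin n → ℝ} {i : Fin n} {ω : Ω}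

theorem τval_mem (K V : Fin (ℓ+1) → Ω → Fin n → ℝ) (i : Fin n) (ω : Ω) :
    M.τval K V i ω ∈ insert (M.T + 1)
      ((fun l => M.t l) '' {l : Fin (ℓ+1) | min (K l ω i) (V l ω i) < 0}) :=
  (Set.insert_nonempty _ _).csInf_mem (Set.toFinite _)

theorem τval_grid (K V : Fin (ℓ+1) → Ω → Fin n → ℝ) (i : Fin n) (ω : Ω) :
    (∃ l, M.τval K V i ω = M.t l) ∨ M.τval K V i ω = M.T + 1 := by
  rcases τval_mem K V i ω with h | ⟨l, -, h⟩
  exacts [Or.inr h, Or.inl ⟨l, h.symm⟩]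

theorem lt_τval_iff {c : ℝ} (hc : c < M.T + 1) :
    c < M.τval K V i ω ↔ ∀ l, M.t l ≤ c → 0 ≤ min (K l ω i) (V l ω i) := by
  rw [τval, Set.Finite.lt_csInf_iff (Set.toFinite _) (Set.insert_nonempty _ _)]
  simp only [Set.forall_mem_insert, Set.forall_mem_image, Set.mem_ofPred_eq, hc, true_and]
  exact forall_congr' fun _ => by grind

theorem le_τval_iff {c : ℝ} (hc : c ≤ M.T + 1) :
    c ≤ M.τval K V i ω ↔ ∀ l, M.t l < c → 0 ≤ min (K l ω i) (V l ω i) := by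
  rw [τval, le_csInf_iff (Set.toFinite _).bddBelow (Set.insert_nonempty _ _)]
  simp only [Set.forall_mem_insert, Set.forall_mem_image, Set.mem_ofPred_eq, hc, true_and]
  exact forall_congr' fun _ => by grind

theorem τval_mono (hK : K ≤ K') (hV : V ≤ V') : M.τval K V ≤ M.τval K' V' := fun i ω =>
  csInf_le_csInf (Set.toFinite _).bddBelow (Set.insert_nonempty _ _) <|
    Set.insert_subset_insert <| Set.image_mono fun l hl =>
      (min_le_min (hK l ω i) (hV l ω i)).trans_lt hl

structure SurvivalAdapted (M : MM Ω n ℓ)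
    (𝓕 : Fin (ℓ+1) → MeasurableSpace Ω) (τ : Fin n → Ω → ℝ) : Prop where
  measurableSet_lt : ∀ l i, MeasurableSet[𝓕 l] {ω | M.t l < τ i ω}
  measurableSet_le : ∀ l i, MeasurableSet[𝓕 l] {ω | M.t l ≤ τ i ω}

theorem survivalAdapted_τval {𝓕 : Fin (ℓ+1) → MeasurableSpace Ω}
    (hmono : Monotone 𝓕) (ht : StrictMono M.t) (htT : M.t (Fin.last ℓ) = M.T)
    (hK : ∀ l i, Measurable[𝓕 l] fun ω => K l ω i)
    (hV : ∀ l i, Measurable[𝓕 l] fun ω => V l ω i) :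
    M.SurvivalAdapted 𝓕 (M.τval K V) := by
  have hT : ∀ l, M.t l < M.T + 1 := fun l => by
    linarith [htT ▸ ht.monotone (Fin.le_last l)]
  have hsafe : ∀ l m i, m ≤ l → MeasurableSet[𝓕 l] {ω | 0 ≤ min (K m ω i) (V m ω i)} :=
    fun l m i hm => measurableSet_le measurable_const
      (((hK m i).mono (hmono hm) le_rfl).min ((hV m i).mono (hmono hm) le_rfl))
  constructor
  · intro l i
    have : {ω | M.t l < M.τval K V i ω}
        = ⋂ m, ⋂ (_ : M.t m ≤ M.t l), {ω | 0 ≤ min (K m ω i) (V m ω i)} := by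
      ext ω; simp [lt_τval_iff (hT l)]
    rw [this]
    exact .iInter fun m => .iInter fun hm => hsafe l m i (ht.le_iff_le.1 hm)
  · intro l i
    have : {ω | M.t l ≤ M.τval K V i ω}
        = ⋂ m, ⋂ (_ : M.t m < M.t l), {ω | 0 ≤ min (K m ω i) (V m ω i)} := by
      ext ω; simp [le_τval_iff (hT l).le]
    rw [this]
    exact .iInter fun m => .iInter fun hm => hsafe l m i (ht.lt_iff_lt.1 hm).le

end DefaultTime

section Monotonicity

variable {A V V' : Fin (ℓ+1) → Ω → Fin n → ℝ} {P P' : Fin (ℓ+1) → Fin (ℓ+1) → Ω → Fin n → ℝ}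
  {τ τ' : Fin n → Ω → ℝ}

theorem Kval_mono (hβ : M.β = 0) (hLb : ∀ l i j, 0 ≤ M.Lb l i j) (hV : V ≤ V')
    (hP : ∀ l k, l < k → P l k ≤ P' l k) (hP' : ∀ l k, l < k → 0 ≤ P' l k) (hτ : τ ≤ τ') :
    M.Kval V P τ ≤ M.Kval V' P' τ' := by
  intro l ω i
  simp only [Kval, hβ, zero_mul, add_zero, zero_add, sub_zero, one_mul]
  gcongr with k hk j
  · exact hV l ω i
  · exact indR_nonneg _
  · exact mul_nonneg (hLb _ _ _) (hP' l k (Finset.mem_filter.1 hk).2 ω j)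
  · exact hLb _ _ _
  · exact hP l k (Finset.mem_filter.1 hk).2 ω j
  · exact indR_mono fun h => h.trans (hτ j ω)

/-- `Vval A V τ l` reads `V` only at `t_l`, so the constant process `fun _ => V` suffices. -/
noncomputable def cash (M : MM Ω n ℓ) (A : Fin (ℓ+1) → Ω → Fin n → ℝ) (τ : Fin n → Ω → ℝ) :
    Fin (ℓ+1) → Ω → Fin n → ℝ :=
  Fin.induction (M.x 0) fun l V => M.Vval A (fun _ => V) τ l

theorem cash_succ (A : Fin (ℓ+1) → Ω → Fin n → ℝ) (τ : Fin n → Ω → ℝ) (l : Fin ℓ) :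
    M.cash A τ l.succ = M.Vval A (M.cash A τ) τ l := by
  rw [cash, Fin.induction_succ]
  rfl

theorem eq_cash (h0 : ∀ ω i, V 0 ω i = M.x 0 ω i)
    (hs : ∀ (l : Fin ℓ) ω i, V l.succ ω i = M.Vval A V τ l ω i) : V = M.cash A τ := by
  funext l
  induction l using Fin.induction with
  | zero => funext ω i; exact h0 ω i
  | succ l ih => funext ω i; rw [hs, cash_succ]; simp only [Vval, ih]

theorem cash_mono (hβ : M.β = 0) (hx0 : ∀ l ω i, 0 < M.x l ω i) (hLb : ∀ l i j, 0 ≤ M.Lb l i j)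
    (hA : ∀ l ω i, A l ω i ∈ Set.Icc (0:ℝ) 1) (hτ : τ ≤ τ') : M.cash A τ ≤ M.cash A τ' := by
  intro l
  induction l using Fin.induction with
  | zero => exact le_rfl
  | succ l ih =>
    intro ω i
    -- these make the gross portfolio return nonnegative, a side goal of `gcongr`
    obtain ⟨hA0, hA1⟩ := hA l.castSucc ω i
    have := hx0 l.succ ω i
    have := hx0 l.castSucc ω i
    have : 0 ≤ 1 - A l.castSucc ω i := by linarith
    rw [cash_succ, cash_succ]
    simp only [Vval, hβ, zero_mul, add_zero]
    gcongr with j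
    · exact ih ω i
    · exact hLb _ _ _
    · exact indR_mono fun h => h.trans_le (hτ j ω)

/-- The default-time component of the clearing map once `V` and `K` have been eliminated:
clearing solutions are its fixed points. -/
noncomputable def nextDefault (M : MM Ω n ℓ) (A : Fin (ℓ+1) → Ω → Fin n → ℝ)
    (P : Fin (ℓ+1) → Fin (ℓ+1) → Ω → Fin n → ℝ) (τ : Fin n → Ω → ℝ) : Fin n → Ω → ℝ :=
  M.τval (M.Kval (M.cash A τ) P τ) (M.cash A τ)

theorem nextDefault_mono (hβ : M.β = 0) (hx0 : ∀ l ω i, 0 < M.x l ω i)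
    (hLb : ∀ l i j, 0 ≤ M.Lb l i j) (hA : ∀ l ω i, A l ω i ∈ Set.Icc (0:ℝ) 1)
    (hP : ∀ l k, l < k → P l k ≤ P' l k) (hP' : ∀ l k, l < k → 0 ≤ P' l k) (hτ : τ ≤ τ') :
    M.nextDefault A P τ ≤ M.nextDefault A P' τ' :=
  have hcash := cash_mono hβ hx0 hLb hA hτ
  τval_mono (Kval_mono hβ hLb hcash hP hP' hτ) hcash

theorem finite_range_nextDefault [Finite Ω] (A : Fin (ℓ+1) → Ω → Fin n → ℝ)
    (Q : (Fin n → Ω → ℝ) → Fin (ℓ+1) → Fin (ℓ+1) → Ω → Fin n → ℝ) :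
    (Set.range fun σ => M.nextDefault A (Q σ) σ).Finite :=
  (Set.Finite.pi fun _ => Set.Finite.pi fun _ => (Set.finite_range M.t).insert (M.T + 1)).subset
    (Set.range_subset_iff.2 fun _ => Set.mem_univ_pi.2 fun _ => Set.mem_univ_pi.2 fun _ =>
      Set.insert_subset_insert (Set.image_subset_range _ _) (τval_mem _ _ _ _))

end Monotonicity

section Adapted

variable {𝓕 : Fin (ℓ+1) → MeasurableSpace Ω}
  {A V : Fin (ℓ+1) → Ω → Fin n → ℝ} {P : Fin (ℓ+1) → Fin (ℓ+1) → Ω → Fin n → ℝ}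
  {τ τ' : Fin n → Ω → ℝ}

theorem cash_adapted (hβ : M.β = 0) (hmono : Monotone 𝓕)
    (hx : ∀ l i, Measurable[𝓕 l] fun ω => M.x l ω i)
    (hA : ∀ l i, Measurable[𝓕 l] fun ω => A l ω i) (hτ : M.SurvivalAdapted 𝓕 τ) :
    ∀ l i, Measurable[𝓕 l] fun ω => M.cash A τ l ω i := by
  intro l
  induction l using Fin.induction with
  | zero => exact hx 0
  | succ l ih =>
    intro i
    have hle : 𝓕 l.castSucc ≤ 𝓕 l.succ := hmono l.castSucc_le_succ
    have hA' := (hA l.castSucc i).mono hle le_rfl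
    have hx' := (hx l.castSucc i).mono hle le_rfl
    have hcash := (ih i).mono hle le_rfl
    have hind : ∀ j, Measurable[𝓕 l.succ] fun ω => indR (M.t l.succ < τ j ω) :=
      fun j => measurable_indR (hτ.measurableSet_lt _ _)
    have := hx l.succ i
    simp only [cash_succ, Vval, hβ, zero_mul, add_zero]
    fun_prop

theorem Kval_adapted (hβ : M.β = 0) (hV : ∀ l i, Measurable[𝓕 l] fun ω => V l ω i)
    (hP : ∀ l k i, Measurable[𝓕 l] fun ω => P l k ω i) (hτ : M.SurvivalAdapted 𝓕 τ) :
    ∀ l i, Measurable[𝓕 l] fun ω => M.Kval V P τ l ω i := by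
  intro l i
  have hind : ∀ j, Measurable[𝓕 l] fun ω => indR (M.t l ≤ τ j ω) :=
    fun j => measurable_indR (hτ.measurableSet_le _ _)
  have := hV l i
  have := hP l
  simp only [Kval, hβ, zero_mul, add_zero, zero_add, sub_zero, one_mul]
  fun_prop

noncomputable def survivalInd (M : MM Ω n ℓ) (τ : Fin n → Ω → ℝ) :
    Fin (ℓ+1) → Fin (ℓ+1) → Ω → Fin n → ℝ :=
  fun l _ ω i => indR (M.t l < τ i ω)

theorem survivalInd_nonneg : 0 ≤ M.survivalInd τ := fun _ _ _ _ => indR_nonneg _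

theorem survivalInd_mono (hτ : τ ≤ τ') : M.survivalInd τ ≤ M.survivalInd τ' :=
  fun _ _ ω i => indR_mono fun h => h.trans_le (hτ i ω)

theorem survivalInd_adapted (hτ : M.SurvivalAdapted 𝓕 τ) :
    ∀ l k i, Measurable[𝓕 l] fun ω => M.survivalInd τ l k ω i :=
  fun l _ i => measurable_indR (hτ.measurableSet_lt l i)

end Adapted

section Clearing

variable [MeasurableSpace Ω] {𝓕 : Fin (ℓ+1) → MeasurableSpace Ω} {μ : Measure Ω}
  {α : Fin (ℓ+1) → (Ω → Fin n → ℝ) → (Ω → Fin n → ℝ) → Ω → Fin n → ℝ}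
  {A : Fin (ℓ+1) → Ω → Fin n → ℝ} {τ τ' σ : Fin n → Ω → ℝ}

theorem Valid.measurableSingletonClass (hM : M.Valid 𝓕 μ) : MeasurableSingletonClass Ω :=
  have hTop : ‹MeasurableSpace Ω› = ⊤ := hM.hTop
  ⟨fun _ => hTop ▸ trivial⟩

noncomputable def survivalProb (M : MM Ω n ℓ) (𝓕 : Fin (ℓ+1) → MeasurableSpace Ω)
    (μ : Measure Ω) (τ : Fin n → Ω → ℝ) : Fin (ℓ+1) → Fin (ℓ+1) → Ω → Fin n → ℝ :=
  fun l k ω i => (μ[fun ω' => indR (M.t k < τ i ω') | 𝓕 l]) ω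

theorem survivalProb_adapted : ∀ l k i, Measurable[𝓕 l] fun ω => M.survivalProb 𝓕 μ τ l k ω i :=
  fun _ _ _ => stronglyMeasurable_condExp.measurable

theorem survivalProb_nonneg [Countable Ω] (hM : M.Valid 𝓕 μ) : 0 ≤ M.survivalProb 𝓕 μ τ :=
  fun _ _ ω _ => condExp_nonneg_of_nonneg hM.hpos (fun _ => indR_nonneg _) ω

theorem survivalProb_mono [Finite Ω] (hM : M.Valid 𝓕 μ) (hτ : τ ≤ τ') :
    M.survivalProb 𝓕 μ τ ≤ M.survivalProb 𝓕 μ τ' := by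
  have := hM.measurableSingletonClass
  have := hM.hprob
  exact fun _ _ ω i =>
    condExp_mono_of_le hM.hpos (fun ω' => indR_mono fun h => h.trans_le (hτ i ω')) ω

theorem survivalProb_le_survivalInd [Finite Ω] (hM : M.Valid 𝓕 μ)
    (hτ : M.SurvivalAdapted 𝓕 τ) {l k : Fin (ℓ+1)} (hlk : l ≤ k) :
    M.survivalProb 𝓕 μ τ l k ≤ M.survivalInd τ l k := by
  have := hM.measurableSingletonClass
  have := hM.hprob
  have hle : 𝓕 l ≤ ‹MeasurableSpace Ω› := (hM.hmono (Fin.le_last l)).trans hM.hlast.le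
  intro ω i
  calc (μ[fun ω' => indR (M.t k < τ i ω') | 𝓕 l]) ω
      ≤ (μ[fun ω' => indR (M.t l < τ i ω') | 𝓕 l]) ω :=
        condExp_mono_of_le hM.hpos
          (fun ω' => indR_mono fun h => (hM.ht.monotone hlk).trans_lt h) ω
    _ = indR (M.t l < τ i ω) := by
        rw [condExp_of_stronglyMeasurable hle
          (measurable_indR (hτ.measurableSet_lt l i)).stronglyMeasurable .of_finite]

theorem survivalAdapted_nextDefault (hM : M.Valid 𝓕 μ) (hβ : M.β = 0)
    (hA : ∀ l i, Measurable[𝓕 l] fun ω => A l ω i) {P : Fin (ℓ+1) → Fin (ℓ+1) → Ω → Fin n → ℝ}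
    (hP : ∀ l k i, Measurable[𝓕 l] fun ω => P l k ω i) (hσ : M.SurvivalAdapted 𝓕 σ) :
    M.SurvivalAdapted 𝓕 (M.nextDefault A P σ) :=
  have hcash := cash_adapted hβ hM.hmono hM.hx hA hσ
  survivalAdapted_τval hM.hmono hM.ht hM.htT (Kval_adapted hβ hcash hP hσ) hcash

theorem isClearingH_of_nextDefault_eq (hM : M.Valid 𝓕 μ) (hβ : M.β = 0)
    (hαA : ∀ K V : Fin (ℓ+1) → Ω → Fin n → ℝ, (fun l => α l (K l) (V l)) = A)
    (hA : ∀ l i, Measurable[𝓕 l] fun ω => A l ω i) (hσ : M.SurvivalAdapted 𝓕 σ)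
    (hfix : M.nextDefault A (M.survivalInd σ) σ = σ) :
    M.isClearingH 𝓕 μ α (M.Kval (M.cash A σ) (M.survivalInd σ) σ) (M.cash A σ)
      (M.survivalInd σ) σ := by
  have hcash := cash_adapted hβ hM.hmono hM.hx hA hσ
  have hP := survivalInd_adapted hσ
  refine ⟨Kval_adapted hβ hcash hP hσ, hcash, fun l k i _ => hP l k i,
    fun _ _ _ _ _ => ⟨indR_nonneg _, indR_le_one _⟩, fun i ω => hfix ▸ τval_grid _ _ i ω,
    fun _ _ => rfl, fun l ω i => by rw [hαA, cash_succ], fun _ _ _ => rfl,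
    fun _ _ _ _ _ => rfl, fun i ω => congrFun (congrFun hfix.symm i) ω⟩

theorem isClearing_of_nextDefault_eq [Finite Ω] (hM : M.Valid 𝓕 μ) (hβ : M.β = 0)
    (hαA : ∀ K V : Fin (ℓ+1) → Ω → Fin n → ℝ, (fun l => α l (K l) (V l)) = A)
    (hA : ∀ l i, Measurable[𝓕 l] fun ω => A l ω i) (hσ : M.SurvivalAdapted 𝓕 σ)
    (hfix : M.nextDefault A (M.survivalProb 𝓕 μ σ) σ = σ) :
    M.isClearing 𝓕 μ α (M.Kval (M.cash A σ) (M.survivalProb 𝓕 μ σ) σ) (M.cash A σ)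
      (M.survivalProb 𝓕 μ σ) σ := by
  have hcash := cash_adapted hβ hM.hmono hM.hx hA hσ
  have hP : ∀ l k i, Measurable[𝓕 l] fun ω => M.survivalProb 𝓕 μ σ l k ω i :=
    survivalProb_adapted
  refine ⟨Kval_adapted hβ hcash hP hσ, hcash, fun l k i _ => hP l k i,
    fun l k hlk ω i => ⟨survivalProb_nonneg hM l k ω i,
      (survivalProb_le_survivalInd hM hσ hlk ω i).trans (indR_le_one _)⟩,
    fun i ω => hfix ▸ τval_grid _ _ i ω,
    fun _ _ => rfl, fun l ω i => by rw [hαA, cash_succ], fun _ _ _ => rfl,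
    fun _ _ _ _ _ => rfl, fun i ω => congrFun (congrFun hfix.symm i) ω⟩

theorem exists_isClearingH_ge [Finite Ω] (hM : M.Valid 𝓕 μ) (hβ : M.β = 0)
    (hαA : ∀ K V : Fin (ℓ+1) → Ω → Fin n → ℝ, (fun l => α l (K l) (V l)) = A)
    (hA01 : ∀ l ω i, A l ω i ∈ Set.Icc (0:ℝ) 1) (hA : ∀ l i, Measurable[𝓕 l] fun ω => A l ω i)
    {K V : Fin (ℓ+1) → Ω → Fin n → ℝ} {P : Fin (ℓ+1) → Fin (ℓ+1) → Ω → Fin n → ℝ}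
    {τ : Fin n → Ω → ℝ} (h : M.isClearing 𝓕 μ α K V P τ) :
    ∃ KH VH PH τH, M.isClearingH 𝓕 μ α KH VH PH τH ∧
      (∀ l ω i, K l ω i ≤ KH l ω i) ∧
      (∀ l ω i, V l ω i ≤ VH l ω i) ∧
      (∀ l k, l ≤ k → ∀ ω i, P l k ω i ≤ PH l k ω i) ∧
      (∀ i ω, τ i ω ≤ τH i ω) := by
  obtain ⟨hK, hV, -, -, -, hV0, hVs, hKe, hPe, hτe⟩ := h
  have hτ : M.SurvivalAdapted 𝓕 τ := funext₂ hτe ▸ survivalAdapted_τval hM.hmono hM.ht hM.htT hK hV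
  rw [hαA] at hVs
  obtain rfl := eq_cash hV0 hVs
  obtain rfl : K = M.Kval (M.cash A τ) P τ := funext₃ hKe
  have hPτ : ∀ l k, l ≤ k → P l k ≤ M.survivalInd τ l k := fun l k hlk ω i =>
    (hPe l k hlk ω i).trans_le (survivalProb_le_survivalInd hM hτ hlk ω i)
  have hF : Monotone fun σ => M.nextDefault A (M.survivalInd σ) σ := fun σ σ' hσ =>
    nextDefault_mono hβ hM.hx0 hM.hLb hA01 (fun l k _ => survivalInd_mono hσ l k)
      (fun l k _ => survivalInd_nonneg l k) hσ
  have hτF : τ ≤ M.nextDefault A (M.survivalInd τ) τ := (funext₂ hτe).trans_le <|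
    nextDefault_mono hβ hM.hx0 hM.hLb hA01 (fun l k hlk => hPτ l k hlk.le)
      (fun l k _ => survivalInd_nonneg l k) le_rfl
  obtain ⟨σ, hσ, hfix, hτσ⟩ := Monotone.exists_isFixedPt_ge hF (finite_range_nextDefault A _)
    (fun ρ hρ => survivalAdapted_nextDefault hM hβ hA (survivalInd_adapted hρ) hρ) hτ hτF
  have hcash := cash_mono hβ hM.hx0 hM.hLb hA01 hτσ
  have hPσ : ∀ l k, l ≤ k → P l k ≤ M.survivalInd σ l k := fun l k hlk =>
    (hPτ l k hlk).trans (survivalInd_mono hτσ l k)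
  exact ⟨_, _, _, σ, isClearingH_of_nextDefault_eq hM hβ hαA hA hσ hfix,
    Kval_mono hβ hM.hLb hcash (fun l k hlk => hPσ l k hlk.le)
      (fun l k _ => survivalInd_nonneg l k) hτσ, hcash, hPσ, hτσ⟩

theorem exists_isClearing_le [Finite Ω] (hM : M.Valid 𝓕 μ) (hβ : M.β = 0)
    (hαA : ∀ K V : Fin (ℓ+1) → Ω → Fin n → ℝ, (fun l => α l (K l) (V l)) = A)
    (hA01 : ∀ l ω i, A l ω i ∈ Set.Icc (0:ℝ) 1) (hA : ∀ l i, Measurable[𝓕 l] fun ω => A l ω i)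
    {KH VH : Fin (ℓ+1) → Ω → Fin n → ℝ} {PH : Fin (ℓ+1) → Fin (ℓ+1) → Ω → Fin n → ℝ}
    {τH : Fin n → Ω → ℝ} (h : M.isClearingH 𝓕 μ α KH VH PH τH) :
    ∃ K V P τ, M.isClearing 𝓕 μ α K V P τ ∧
      (∀ l ω i, K l ω i ≤ KH l ω i) ∧
      (∀ l ω i, V l ω i ≤ VH l ω i) ∧
      (∀ l k, l ≤ k → ∀ ω i, P l k ω i ≤ PH l k ω i) ∧
      (∀ i ω, τ i ω ≤ τH i ω) := by
  obtain ⟨hK, hV, -, hP01, -, hV0, hVs, hKe, hPe, hτe⟩ := h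
  have hτ : M.SurvivalAdapted 𝓕 τH :=
    funext₂ hτe ▸ survivalAdapted_τval hM.hmono hM.ht hM.htT hK hV
  rw [hαA] at hVs
  obtain rfl := eq_cash hV0 hVs
  obtain rfl : KH = M.Kval (M.cash A τH) PH τH := funext₃ hKe
  have hPH0 : ∀ l k, l < k → 0 ≤ PH l k := fun l k hlk ω i => (hP01 l k hlk.le ω i).1
  have hτP : ∀ l k, l ≤ k → M.survivalProb 𝓕 μ τH l k ≤ PH l k := fun l k hlk ω i =>
    (survivalProb_le_survivalInd hM hτ hlk ω i).trans_eq (hPe l k hlk ω i).symm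
  have hF : Monotone fun σ => M.nextDefault A (M.survivalProb 𝓕 μ σ) σ := fun σ σ' hσ =>
    nextDefault_mono hβ hM.hx0 hM.hLb hA01 (fun l k _ => survivalProb_mono hM hσ l k)
      (fun l k _ => survivalProb_nonneg hM l k) hσ
  have hFτ : M.nextDefault A (M.survivalProb 𝓕 μ τH) τH ≤ τH :=
    (nextDefault_mono hβ hM.hx0 hM.hLb hA01 (fun l k hlk => hτP l k hlk.le) hPH0 le_rfl).trans_eq
      (funext₂ hτe).symm
  obtain ⟨σ, hσ, hfix, hστ⟩ := Monotone.exists_isFixedPt_le hF (finite_range_nextDefault A _)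
    (fun ρ hρ => survivalAdapted_nextDefault hM hβ hA survivalProb_adapted hρ) hτ hFτ
  have hcash := cash_mono hβ hM.hx0 hM.hLb hA01 hστ
  have hPσ : ∀ l k, l ≤ k → M.survivalProb 𝓕 μ σ l k ≤ PH l k := fun l k hlk =>
    (survivalProb_mono hM hστ l k).trans (hτP l k hlk)
  exact ⟨_, _, _, σ, isClearing_of_nextDefault_eq hM hβ hαA hA hσ hfix,
    Kval_mono hβ hM.hLb hcash (fun l k hlk => hPσ l k hlk.le) hPH0 hστ, hcash, hPσ, hστ⟩

end Clearing

end MM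

open MM in
/-- Lemma B.4: comparison of mark-to-market and historical price
accounting in the multiple-maturity model with zero recovery (`β = 0`) and rebalancing
strategies independent of bank performance.  Every mark-to-market clearing solution is
dominated componentwise by some historical price accounting clearing solution (the
`P`-components being compared for maturities `k ≥ l`), and conversely every historical price
accounting clearing solution dominates some mark-to-market clearing solution. -/
theorem multi_maturity_mtm_hpa_comparison
    {Ω : Type*} [Fintype Ω] [MeasurableSpace Ω] {n ℓ : ℕ}
    (M : MM Ω n ℓ) (𝓕 : Fin (ℓ+1) → MeasurableSpace Ω) (μ : MeasureTheory.Measure Ω)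
    (hM : M.Valid 𝓕 μ)
    (hβ : M.β = 0)
    (α : Fin (ℓ+1) → (Ω → Fin n → ℝ) → (Ω → Fin n → ℝ) → Ω → Fin n → ℝ)
    (hα_range : ∀ l Kh Vh ω i, α l Kh Vh ω i ∈ Set.Icc (0:ℝ) 1)
    (hα_meas : ∀ (l : Fin (ℓ+1)) (Kh Vh : Ω → Fin n → ℝ),
      ∀ i, Measurable[𝓕 l] fun ω => α l Kh Vh ω i)
    (hα_const : ∀ (l : Fin (ℓ+1)) (Kh Kh' Vh Vh' : Ω → Fin n → ℝ),
      α l Kh Vh = α l Kh' Vh') :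
    (∀ K V P τ, M.isClearing 𝓕 μ α K V P τ →
      ∃ KH VH PH τH, M.isClearingH 𝓕 μ α KH VH PH τH ∧
        (∀ l ω i, K l ω i ≤ KH l ω i) ∧
        (∀ l ω i, V l ω i ≤ VH l ω i) ∧
        (∀ l k, l ≤ k → ∀ ω i, P l k ω i ≤ PH l k ω i) ∧
        (∀ i ω, τ i ω ≤ τH i ω)) ∧
    (∀ KH VH PH τH, M.isClearingH 𝓕 μ α KH VH PH τH →
      ∃ K V P τ, M.isClearing 𝓕 μ α K V P τ ∧
        (∀ l ω i, K l ω i ≤ KH l ω i) ∧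
        (∀ l ω i, V l ω i ≤ VH l ω i) ∧
        (∀ l k, l ≤ k → ∀ ω i, P l k ω i ≤ PH l k ω i) ∧
        (∀ i ω, τ i ω ≤ τH i ω)) := by
  have hαA : ∀ K V : Fin (ℓ+1) → Ω → Fin n → ℝ, (fun l => α l (K l) (V l)) = fun l => α l 0 0 :=
    fun K V => funext fun l => hα_const l (K l) 0 (V l) 0
  exact ⟨fun _ _ _ _ => exists_isClearingH_ge hM hβ hαA (fun l => hα_range l 0 0)
      (fun l => hα_meas l 0 0),
    fun _ _ _ _ => exists_isClearing_le hM hβ hαA (fun l => hα_range l 0 0)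
      (fun l => hα_meas l 0 0)⟩

end Paper
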